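/- Let n ≥ 1, let Φ ∈ ℝ^{n×n} be symmetric, and let γ ≠ 0. Define the 2n×2n block matrices M := [[0, Φ],[−I, γI]], P⁽²⁾ := [[0,0],[0,I]], and Q := (2γ)^{−1}[[Φ, 0],[0, I]]. Then M Q + Q Mᵀ = P⁽²⁾. Moreover, if Φ is positive definite and γ > 0, then Q = ∫₀^∞ e^{−tM} P⁽²⁾ e^{−tMᵀ} dt; consequently, for every X ∈ ℝ^{2n}, ∫₀^∞ |(e^{−tMᵀ}X)₂|² dt = (1/γ) H(X), where (·)₂ denotes the second (momentum) block of the vector and H(X) := (1/2)(X₂ᵀX₂ + X₁ᵀΦX₁). -/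

import Mathlib

/-!
The Lyapunov identity `MQ + QMᵀ = P⁽²⁾` is a block computation. For `Φ > 0` and `γ > 0`, the
flow `Y(t) = e^{-tMᵀ}X` solves the damped oscillator `q' = p`, `p' = -Φq - γp`. Its energy
`|p|² + qᵀΦq` is only nonincreasing, but adding a small cross term `2ε q·p` gives a coercive
quadratic form `T` with `MT + TMᵀ ≥ εT` (hypocoercivity), so `YᵀTY ≤ e^{-εt} XᵀTX` and the
flow decays exponentially. Then `d/dt (e^{-tM}Qe^{-tMᵀ}) = -e^{-tM}P⁽²⁾e^{-tMᵀ}` integrates over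
`(0, ∞)` to `Q`, and the last identity is the quadratic form `XᵀQX = H(X)/γ` of this integral,
because `|(e^{-tMᵀ}X)₂|² = Xᵀe^{-tM}P⁽²⁾e^{-tMᵀ}X`.
-/

open Real MeasureTheory Matrix
open scoped BigOperators

noncomputable section

/-- The block matrix `M = [[0, Φ],[−I, γI]]` on `ℝ^n ⊕ ℝ^n`. -/
def Mblk (n : ℕ) (Φ : Matrix (Fin n) (Fin n) ℝ) (γ : ℝ) :
    Matrix (Fin 2 × Fin n) (Fin 2 × Fin n) ℝ :=
  fun p q =>
    if p.1 = 0 then (if q.1 = 0 then 0 else Φ p.2 q.2)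
    else (if q.1 = 0 then -(if p.2 = q.2 then 1 else 0)
          else γ * (if p.2 = q.2 then 1 else 0))

/-- The block matrix `P⁽²⁾ = [[0,0],[0,I]]`. -/
def Pblk (n : ℕ) : Matrix (Fin 2 × Fin n) (Fin 2 × Fin n) ℝ :=
  fun p q => if p.1 = 1 ∧ q.1 = 1 ∧ p.2 = q.2 then 1 else 0

/-- The block matrix `Q = (2γ)⁻¹ [[Φ,0],[0,I]]`. -/
def Qblk (n : ℕ) (Φ : Matrix (Fin n) (Fin n) ℝ) (γ : ℝ) :
    Matrix (Fin 2 × Fin n) (Fin 2 × Fin n) ℝ :=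
  fun p q => (2 * γ)⁻¹ *
    (if p.1 = 0 then (if q.1 = 0 then Φ p.2 q.2 else 0)
     else (if q.1 = 0 then 0 else (if p.2 = q.2 then 1 else 0)))

open Filter Topology Asymptotics

section DotProduct

variable {ι : Type*} [Fintype ι]

lemma sq_le_dotProduct_self (v : ι → ℝ) (i : ι) : v i ^ 2 ≤ v ⬝ᵥ v := by
  simpa [dotProduct, sq] using
    Finset.single_le_sum (fun k _ => mul_self_nonneg (v k)) (Finset.mem_univ i)

lemma neg_two_mul_mul_dotProduct_le (q p : ι → ℝ) (a b : ℝ) :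
    -(2 * a * b * (q ⬝ᵥ p)) ≤ a ^ 2 * (q ⬝ᵥ q) + b ^ 2 * (p ⬝ᵥ p) := by
  have h := dotProduct_star_self_nonneg (a • q + b • p)
  simp only [star_trivial, add_dotProduct, dotProduct_add, smul_dotProduct, dotProduct_smul,
    smul_eq_mul, dotProduct_comm p q] at h
  nlinarith

lemma abs_dotProduct_mulVec_le (B : Matrix ι ι ℝ) (u w : ι → ℝ) :
    |u ⬝ᵥ B *ᵥ w| ≤ (∑ i, ∑ j, |B i j|) * (u ⬝ᵥ u + w ⬝ᵥ w) := by
  have hterm : ∀ i j, |u i * (B i j * w j)| ≤ |B i j| * (u ⬝ᵥ u + w ⬝ᵥ w) := fun i j => by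
    rw [abs_mul, abs_mul, mul_left_comm]
    refine mul_le_mul_of_nonneg_left ?_ (abs_nonneg _)
    nlinarith [sq_nonneg (|u i| - |w j|), sq_abs (u i), sq_abs (w j), sq_le_dotProduct_self u i,
      sq_le_dotProduct_self w j]
  calc |u ⬝ᵥ B *ᵥ w| = |∑ i, ∑ j, u i * (B i j * w j)| := by
        simp only [dotProduct, mulVec, Finset.mul_sum]
    _ ≤ ∑ i, ∑ j, |u i * (B i j * w j)| :=
        (Finset.abs_sum_le_sum_abs _ _).trans
          (Finset.sum_le_sum fun i _ => Finset.abs_sum_le_sum_abs _ _)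
    _ ≤ ∑ i, ∑ j, |B i j| * (u ⬝ᵥ u + w ⬝ᵥ w) :=
        Finset.sum_le_sum fun i _ => Finset.sum_le_sum fun j _ => hterm i j
    _ = (∑ i, ∑ j, |B i j|) * (u ⬝ᵥ u + w ⬝ᵥ w) := by simp only [Finset.sum_mul]

lemma isCompact_setOf_dotProduct_self_eq_one : IsCompact {v : ι → ℝ | v ⬝ᵥ v = 1} := by
  refine (isCompact_closedBall (0 : ι → ℝ) 1).of_isClosed_subset
    (isClosed_eq (by fun_prop) continuous_const) fun v hv => ?_
  refine mem_closedBall_zero_iff.2 ((pi_norm_le_iff_of_nonneg zero_le_one).2 fun j => ?_)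
  rw [Real.norm_eq_abs, ← sq_le_one_iff_abs_le_one]
  exact (sq_le_dotProduct_self v j).trans_eq hv

lemma Matrix.PosDef.exists_pos_mul_dotProduct_self_le {Φ : Matrix ι ι ℝ} (hΦ : Φ.PosDef) :
    ∃ m > 0, ∀ v, m * (v ⬝ᵥ v) ≤ v ⬝ᵥ Φ *ᵥ v := by
  classical
  rcases isEmpty_or_nonempty ι with hι | ⟨⟨i⟩⟩
  · exact ⟨1, one_pos, fun v => by simp [dotProduct]⟩
  have hpos : ∀ v ≠ 0, 0 < v ⬝ᵥ Φ *ᵥ v := fun v hv => by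
    simpa using hΦ.dotProduct_mulVec_pos hv
  -- the minimum of the form on the unit sphere works, by homogeneity
  obtain ⟨v₀, hv₀, hmin⟩ := isCompact_setOf_dotProduct_self_eq_one.exists_isMinOn
    ⟨Pi.single i 1, by simp⟩ (by fun_prop : Continuous fun v : ι → ℝ => v ⬝ᵥ Φ *ᵥ v).continuousOn
  refine ⟨v₀ ⬝ᵥ Φ *ᵥ v₀, hpos v₀ fun h => by simp [h] at hv₀, fun v => ?_⟩
  rcases eq_or_ne v 0 with rfl | hv
  · simp
  have hvv : 0 < v ⬝ᵥ v := by
    simpa using dotProduct_star_self_pos_iff.2 hv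
  set r := √(v ⬝ᵥ v)
  have hr : 0 < r := Real.sqrt_pos.2 hvv
  have hrr : r ^ 2 = v ⬝ᵥ v := Real.sq_sqrt hvv.le
  have hw : r⁻¹ • v ∈ {v : ι → ℝ | v ⬝ᵥ v = 1} := by
    simp only [Set.mem_ofPred_eq, smul_dotProduct, dotProduct_smul, smul_eq_mul, ← hrr]
    field_simp
  have hmin' : v₀ ⬝ᵥ Φ *ᵥ v₀ ≤ (r⁻¹ • v) ⬝ᵥ Φ *ᵥ (r⁻¹ • v) := hmin hw
  simp only [mulVec_smul, smul_dotProduct, dotProduct_smul, smul_eq_mul] at hmin'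
  rw [← mul_assoc, ← mul_inv, ← sq, le_inv_mul_iff₀ (by positivity)] at hmin'
  rwa [← hrr, mul_comm]

end DotProduct

section LyapunovFlow

variable {ι : Type*} [Fintype ι]

def dotProductMulVecCLM (x y : ι → ℝ) : Matrix ι ι ℝ →L[ℝ] ℝ :=
  LinearMap.toContinuousLinearMap
    { toFun := fun B => x ⬝ᵥ B *ᵥ y
      map_add' := fun B C => by simp [add_mulVec]
      map_smul' := fun s B => by simp [smul_mulVec] }

@[simp] lemma dotProductMulVecCLM_apply (x y : ι → ℝ) (B : Matrix ι ι ℝ) :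
    dotProductMulVecCLM x y B = x ⬝ᵥ B *ᵥ y :=
  rfl

variable [DecidableEq ι]

attribute [local instance] Matrix.linftyOpNormedRing Matrix.linftyOpNormedAlgebra

lemma hasDerivAt_exp_neg_smul (A : Matrix ι ι ℝ) (t : ℝ) :
    HasDerivAt (fun t : ℝ => NormedSpace.exp ((-t) • A))
      (-(A * NormedSpace.exp ((-t) • A))) t := by
  have h := (hasDerivAt_exp_smul_const' A (-t)).scomp t (hasDerivAt_neg t)
  rw [neg_one_smul] at h
  exact h

lemma hasDerivAt_exp_mul_mul_exp_transpose (A S : Matrix ι ι ℝ) (t : ℝ) :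
    HasDerivAt (fun t : ℝ => NormedSpace.exp ((-t) • A) * S * NormedSpace.exp ((-t) • Aᵀ))
      (-(NormedSpace.exp ((-t) • A) * (A * S + S * Aᵀ) * NormedSpace.exp ((-t) • Aᵀ))) t := by
  have hcomm : A * NormedSpace.exp ((-t) • A) = NormedSpace.exp ((-t) • A) * A :=
    ((Commute.refl A).smul_right (-t)).exp_right
  refine (((hasDerivAt_exp_neg_smul A t).mul_const S).mul
    (hasDerivAt_exp_neg_smul Aᵀ t)).congr_deriv ?_
  rw [hcomm]
  noncomm_ring

lemma hasDerivAt_dotProduct_exp_mul_mul_exp_transpose_mulVec (A S : Matrix ι ι ℝ) (x y : ι → ℝ)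
    (t : ℝ) :
    HasDerivAt
      (fun t : ℝ => x ⬝ᵥ (NormedSpace.exp ((-t) • A) * S * NormedSpace.exp ((-t) • Aᵀ)) *ᵥ y)
      (-(x ⬝ᵥ (NormedSpace.exp ((-t) • A) * (A * S + S * Aᵀ) * NormedSpace.exp ((-t) • Aᵀ)) *ᵥ y))
      t := by
  have h := (dotProductMulVecCLM x y).hasFDerivAt.comp_hasDerivAt t
    (hasDerivAt_exp_mul_mul_exp_transpose A S t)
  simp only [Function.comp_def, dotProductMulVecCLM_apply] at h
  exact h.congr_deriv (by erw [dotProductMulVecCLM_apply, neg_mulVec, dotProduct_neg])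

lemma dotProduct_exp_mul_mul_exp_transpose_mulVec (A S : Matrix ι ι ℝ) (x y : ι → ℝ) (t : ℝ) :
    x ⬝ᵥ (NormedSpace.exp ((-t) • A) * S * NormedSpace.exp ((-t) • Aᵀ)) *ᵥ y =
      (NormedSpace.exp ((-t) • Aᵀ) *ᵥ x) ⬝ᵥ S *ᵥ (NormedSpace.exp ((-t) • Aᵀ) *ᵥ y) := by
  rw [← transpose_smul, Matrix.exp_transpose, ← mulVec_mulVec, ← mulVec_mulVec, dotProduct_mulVec]
  simp only [mulVec_transpose]

/-- `v ↦ v ⬝ᵥ T *ᵥ v` is a coercive Lyapunov function for the flow `t ↦ exp (-t Aᵀ)`, decaying at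
rate `c`. -/
structure IsLyapunovMatrix (A T : Matrix ι ι ℝ) (c l : ℝ) : Prop where
  coercive : ∀ v, l * (v ⬝ᵥ v) ≤ v ⬝ᵥ T *ᵥ v
  dissipative : ∀ v, c * (v ⬝ᵥ T *ᵥ v) ≤ v ⬝ᵥ (A * T + T * Aᵀ) *ᵥ v

lemma IsLyapunovMatrix.energy_le {A T : Matrix ι ι ℝ} {c l : ℝ} (hT : IsLyapunovMatrix A T c l)
    (x : ι → ℝ) {t : ℝ} (ht : 0 ≤ t) :
    (NormedSpace.exp ((-t) • Aᵀ) *ᵥ x) ⬝ᵥ T *ᵥ (NormedSpace.exp ((-t) • Aᵀ) *ᵥ x) ≤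
      Real.exp (-c * t) * (x ⬝ᵥ T *ᵥ x) := by
  set V := fun t : ℝ => x ⬝ᵥ (NormedSpace.exp ((-t) • A) * T * NormedSpace.exp ((-t) • Aᵀ)) *ᵥ x
  set W := fun t : ℝ =>
    x ⬝ᵥ (NormedSpace.exp ((-t) • A) * (A * T + T * Aᵀ) * NormedSpace.exp ((-t) • Aᵀ)) *ᵥ x
  have hu : ∀ s, HasDerivAt (fun s => Real.exp (c * s) * V s)
      (c * Real.exp (c * s) * V s + Real.exp (c * s) * -W s) s := fun s =>
    (((hasDerivAt_id s).const_mul c).exp.congr_deriv (by simp [mul_comm])).mul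
      (hasDerivAt_dotProduct_exp_mul_mul_exp_transpose_mulVec A T x x s)
  have hVW : ∀ s, c * V s ≤ W s := fun s => by
    simp only [V, W, dotProduct_exp_mul_mul_exp_transpose_mulVec]
    exact hT.dissipative _
  have hanti := antitone_of_hasDerivAt_nonpos hu fun s => show _ ≤ (0 : ℝ) by
    nlinarith [Real.exp_pos (c * s), hVW s]
  have hV0 : V 0 = x ⬝ᵥ T *ᵥ x := by simp [V]
  have hVt : V t ≤ Real.exp (-c * t) * V 0 := by
    have := hanti ht
    simp only [mul_zero, Real.exp_zero, one_mul] at this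
    rw [neg_mul, Real.exp_neg, le_inv_mul_iff₀ (Real.exp_pos _)]
    exact this
  rw [hV0] at hVt
  simpa only [V, dotProduct_exp_mul_mul_exp_transpose_mulVec] using hVt

lemma IsLyapunovMatrix.dotProduct_self_le {A T : Matrix ι ι ℝ} {c l : ℝ}
    (hT : IsLyapunovMatrix A T c l) (hl : 0 < l) (x : ι → ℝ) {t : ℝ} (ht : 0 ≤ t) :
    (NormedSpace.exp ((-t) • Aᵀ) *ᵥ x) ⬝ᵥ (NormedSpace.exp ((-t) • Aᵀ) *ᵥ x) ≤
      Real.exp (-c * t) * (x ⬝ᵥ T *ᵥ x / l) := by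
  rw [mul_div_assoc', le_div_iff₀ hl, mul_comm]
  exact (hT.coercive _).trans (hT.energy_le x ht)

lemma IsLyapunovMatrix.isBigO {A T : Matrix ι ι ℝ} {c l : ℝ} (hT : IsLyapunovMatrix A T c l)
    (hl : 0 < l) (B : Matrix ι ι ℝ) (x y : ι → ℝ) :
    (fun t : ℝ => x ⬝ᵥ (NormedSpace.exp ((-t) • A) * B * NormedSpace.exp ((-t) • Aᵀ)) *ᵥ y)
      =O[atTop] fun t => Real.exp (-c * t) := by
  refine IsBigO.of_bound ((∑ i, ∑ j, |B i j|) * (x ⬝ᵥ T *ᵥ x / l + y ⬝ᵥ T *ᵥ y / l)) ?_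
  filter_upwards [eventually_ge_atTop 0] with t ht
  rw [Real.norm_eq_abs, Real.norm_eq_abs, abs_of_pos (Real.exp_pos _),
    dotProduct_exp_mul_mul_exp_transpose_mulVec]
  refine (abs_dotProduct_mulVec_le B _ _).trans ?_
  have hB : 0 ≤ ∑ i, ∑ j, |B i j| := by positivity
  have := add_le_add (hT.dotProduct_self_le hl x ht) (hT.dotProduct_self_le hl y ht)
  nlinarith [mul_le_mul_of_nonneg_left this hB]

theorem IsLyapunovMatrix.dotProduct_mulVec_eq_integral {A T S P : Matrix ι ι ℝ} {c l : ℝ}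
    (hT : IsLyapunovMatrix A T c l) (hc : 0 < c) (hl : 0 < l) (hS : A * S + S * Aᵀ = P)
    (x y : ι → ℝ) :
    x ⬝ᵥ S *ᵥ y = ∫ t in Set.Ioi (0 : ℝ),
      x ⬝ᵥ (NormedSpace.exp ((-t) • A) * P * NormedSpace.exp ((-t) • Aᵀ)) *ᵥ y := by
  have hderiv : ∀ t, HasDerivAt
      (fun t : ℝ => -(x ⬝ᵥ (NormedSpace.exp ((-t) • A) * S * NormedSpace.exp ((-t) • Aᵀ)) *ᵥ y))
      (x ⬝ᵥ (NormedSpace.exp ((-t) • A) * P * NormedSpace.exp ((-t) • Aᵀ)) *ᵥ y) t := fun t => by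
    simpa [hS] using (hasDerivAt_dotProduct_exp_mul_mul_exp_transpose_mulVec A S x y t).fun_neg
  have hcont : Continuous fun t : ℝ =>
      x ⬝ᵥ (NormedSpace.exp ((-t) • A) * P * NormedSpace.exp ((-t) • Aᵀ)) *ᵥ y :=
    continuous_iff_continuousAt.2 fun t =>
      (hasDerivAt_dotProduct_exp_mul_mul_exp_transpose_mulVec A P x y t).continuousAt
  have hint := integrable_of_isBigO_exp_neg (a := 0) hc hcont.continuousOn (hT.isBigO hl P x y)
  have hexp : Tendsto (fun t : ℝ => Real.exp (-c * t)) atTop (𝓝 0) :=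
    Real.tendsto_exp_atBot.comp (tendsto_id.const_mul_atTop_of_neg (neg_neg_iff_pos.2 hc))
  have hlim := ((hT.isBigO hl S x y).trans_tendsto hexp).neg
  rw [neg_zero] at hlim
  rw [integral_Ioi_of_hasDerivAt_of_tendsto' (fun t _ => hderiv t) hint hlim]
  simp

end LyapunovFlow

section BlockMatrices

variable {n : ℕ} (Φ : Matrix (Fin n) (Fin n) ℝ)

/-- `[[αΦ, βI], [βI, δI]]`. For `α = δ` this family is stable under `K ↦ MK + KMᵀ`. -/
def Kblk (α β δ : ℝ) : Matrix (Fin 2 × Fin n) (Fin 2 × Fin n) ℝ :=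
  fun p q =>
    if p.1 = 0 then (if q.1 = 0 then α * Φ p.2 q.2 else β * (if p.2 = q.2 then 1 else 0))
    else (if q.1 = 0 then β * (if p.2 = q.2 then 1 else 0) else δ * (if p.2 = q.2 then 1 else 0))

lemma Qblk_eq_Kblk (γ : ℝ) : Qblk n Φ γ = Kblk Φ (2 * γ)⁻¹ 0 (2 * γ)⁻¹ := by
  ext p q
  simp only [Qblk, Kblk]
  split_ifs <;> simp

lemma Pblk_eq_Kblk : Pblk n = Kblk Φ 0 0 1 := by
  ext ⟨i, j⟩ ⟨k, l⟩
  fin_cases i <;> fin_cases k <;> simp [Pblk, Kblk]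

lemma Mblk_mul_Kblk_add_Kblk_mul_transpose (hΦ : Φ.IsSymm) (γ α β : ℝ) :
    Mblk n Φ γ * Kblk Φ α β α + Kblk Φ α β α * (Mblk n Φ γ)ᵀ =
      Kblk Φ (2 * β) (γ * β) (2 * (γ * α - β)) := by
  ext ⟨i, j⟩ ⟨k, l⟩
  have hsym : Φ l j = Φ j l := hΦ.apply j l
  fin_cases i <;> fin_cases k <;>
    simp only [Fin.zero_eta, Fin.isValue, Fin.mk_one, Matrix.add_apply, Matrix.mul_apply,
      transpose_apply, Mblk, Kblk, ↓reduceIte, one_ne_zero, mul_ite, ite_mul, mul_one, mul_zero,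
      one_mul, zero_mul, mul_neg, neg_mul, zero_add, Fintype.sum_prod_type, Fin.sum_univ_two,
      Finset.sum_ite_irrel, Finset.sum_const_zero, Finset.sum_ite_eq, Finset.sum_ite_eq',
      Finset.mem_univ, Finset.sum_neg_distrib, hsym] <;>
    (try split_ifs) <;> ring

lemma dotProduct_Kblk_mulVec (α β δ : ℝ) (v : Fin 2 × Fin n → ℝ) :
    v ⬝ᵥ Kblk Φ α β δ *ᵥ v =
      α * ((fun j => v (0, j)) ⬝ᵥ Φ *ᵥ fun j => v (0, j)) +
      2 * β * ((fun j => v (0, j)) ⬝ᵥ fun j => v (1, j)) +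
      δ * ((fun j => v (1, j)) ⬝ᵥ fun j => v (1, j)) := by
  simp only [dotProduct, mulVec, Fintype.sum_prod_type, Fin.sum_univ_two, Kblk]
  simp only [Fin.isValue, ↓reduceIte, one_ne_zero, mul_ite, mul_one, mul_zero, ite_mul, zero_mul,
    Finset.sum_ite_eq, Finset.mem_univ, mul_add, Finset.mul_sum, ← Finset.sum_add_distrib]
  refine Finset.sum_congr rfl fun j _ => ?_
  ring_nf

lemma dotProduct_self_eq_add (v : Fin 2 × Fin n → ℝ) :
    v ⬝ᵥ v = ((fun j => v (0, j)) ⬝ᵥ fun j => v (0, j)) +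
      ((fun j => v (1, j)) ⬝ᵥ fun j => v (1, j)) := by
  simp [dotProduct, Fintype.sum_prod_type, Fin.sum_univ_two]

lemma isLyapunovMatrix_Mblk_Kblk (hΦ : Φ.IsSymm) {m γ ε : ℝ} (hm : 0 < m)
    (hΦm : ∀ v, m * (v ⬝ᵥ v) ≤ v ⬝ᵥ Φ *ᵥ v) (hε : 0 < ε) (hεγ : 3 * ε ≤ γ) (hεm : ε * γ ≤ m) :
    IsLyapunovMatrix (Mblk n Φ γ) (Kblk Φ 1 ε 1) ε (min (1 / 2) (m / 3)) where
  coercive v := by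
    rw [dotProduct_Kblk_mulVec, dotProduct_self_eq_add]
    set q := fun j => v (0, j)
    set p := fun j => v (1, j)
    have hq : 0 ≤ q ⬝ᵥ q := by simpa using dotProduct_star_self_nonneg q
    have hp : 0 ≤ p ⬝ᵥ p := by simpa using dotProduct_star_self_nonneg p
    have hAMGM := neg_two_mul_mul_dotProduct_le q p (2 * ε) 1
    have hεε : ε ^ 2 ≤ m / 3 := by nlinarith
    nlinarith [hΦm q, min_le_left (1 / 2) (m / 3), min_le_right (1 / 2) (m / 3)]
  dissipative v := by
    rw [Mblk_mul_Kblk_add_Kblk_mul_transpose Φ hΦ, dotProduct_Kblk_mulVec, dotProduct_Kblk_mulVec]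
    set q := fun j => v (0, j)
    set p := fun j => v (1, j)
    have hq : 0 ≤ q ⬝ᵥ q := by simpa using dotProduct_star_self_nonneg q
    have hp : 0 ≤ p ⬝ᵥ p := by simpa using dotProduct_star_self_nonneg p
    -- after scaling by `mγ`, AM-GM with weights `m`, `γ` absorbs the cross term
    have hAMGM := neg_two_mul_mul_dotProduct_le q p m γ
    have hγ : 0 < γ := by linarith
    have hE := hΦm q
    have h1 := mul_le_mul_of_nonneg_left hAMGM (by nlinarith : 0 ≤ ε * (γ - ε))
    refine le_of_mul_le_mul_left ?_ (mul_pos hm hγ)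
    have h2 := mul_le_mul_of_nonneg_left hE (by positivity : 0 ≤ m * γ * ε)
    have h3 : 0 ≤ (m - ε * γ) * γ ^ 2 * (p ⬝ᵥ p) := by
      have : 0 ≤ m - ε * γ := by linarith
      positivity
    have h4 : 0 ≤ m * γ * (γ - 3 * ε) * (p ⬝ᵥ p) := by
      have : 0 ≤ γ - 3 * ε := by linarith
      positivity
    nlinarith [mul_nonneg (sq_nonneg (ε * γ)) hp, mul_nonneg (sq_nonneg (ε * m)) hq]

lemma exists_isLyapunovMatrix_Mblk (hΦ : Φ.IsSymm) (hpd : Φ.PosDef) {γ : ℝ} (hγ : 0 < γ) :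
    ∃ T c l, 0 < c ∧ 0 < l ∧ IsLyapunovMatrix (Mblk n Φ γ) T c l := by
  obtain ⟨m, hm, hΦm⟩ := hpd.exists_pos_mul_dotProduct_self_le
  have hε : 0 < min (γ / 3) (m / γ) := lt_min (by positivity) (by positivity)
  refine ⟨_, _, _, hε, lt_min (by norm_num) (by positivity),
    isLyapunovMatrix_Mblk_Kblk Φ hΦ hm hΦm hε (by linarith [min_le_left (γ / 3) (m / γ)]) ?_⟩
  calc min (γ / 3) (m / γ) * γ ≤ m / γ * γ := by gcongr; exact min_le_right _ _
    _ = m := div_mul_cancel₀ m hγ.ne'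

lemma Mblk_mul_Qblk_add_Qblk_mul_transpose (hΦ : Φ.IsSymm) {γ : ℝ} (hγ : γ ≠ 0) :
    Mblk n Φ γ * Qblk n Φ γ + Qblk n Φ γ * (Mblk n Φ γ)ᵀ = Pblk n := by
  rw [Qblk_eq_Kblk, Mblk_mul_Kblk_add_Kblk_mul_transpose Φ hΦ, Pblk_eq_Kblk Φ]
  field_simp
  norm_num

lemma sum_sq_snd_eq_dotProduct_Pblk_mulVec (v : Fin 2 × Fin n → ℝ) :
    ∑ j, v (1, j) ^ 2 = v ⬝ᵥ Pblk n *ᵥ v := by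
  rw [Pblk_eq_Kblk 0, dotProduct_Kblk_mulVec]
  simp [dotProduct, sq]

lemma dotProduct_Qblk_mulVec (γ : ℝ) (v : Fin 2 × Fin n → ℝ) :
    v ⬝ᵥ Qblk n Φ γ *ᵥ v =
      1 / γ * (1 / 2 * ((∑ j, v (1, j) ^ 2) + ∑ j, ∑ j', v (0, j) * Φ j j' * v (0, j'))) := by
  have hq : ((fun j => v (0, j)) ⬝ᵥ Φ *ᵥ fun j => v (0, j)) =
      ∑ j, ∑ j', v (0, j) * Φ j j' * v (0, j') := by
    simp only [dotProduct, mulVec, Finset.mul_sum, mul_assoc]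
  have hp : ((fun j => v (1, j)) ⬝ᵥ fun j => v (1, j)) = ∑ j, v (1, j) ^ 2 := by
    simp only [dotProduct, sq]
  rw [Qblk_eq_Kblk, dotProduct_Kblk_mulVec, hq, hp]
  ring

end BlockMatrices

theorem stmt18_general (n : ℕ) (Φ : Matrix (Fin n) (Fin n) ℝ) (hΦ : Φ.IsSymm)
    (γ : ℝ) (hγ : γ ≠ 0) :
    Mblk n Φ γ * Qblk n Φ γ + Qblk n Φ γ * (Mblk n Φ γ)ᵀ = Pblk n ∧
    (Φ.PosDef → 0 < γ →
      (∀ p q : Fin 2 × Fin n,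
        Qblk n Φ γ p q = ∫ t in Set.Ioi (0:ℝ),
          (NormedSpace.exp ((-t) • Mblk n Φ γ) * Pblk n *
            NormedSpace.exp ((-t) • (Mblk n Φ γ)ᵀ)) p q) ∧
      ∀ X : Fin 2 × Fin n → ℝ,
        (∫ t in Set.Ioi (0:ℝ), ∑ j : Fin n,
            ((NormedSpace.exp ((-t) • (Mblk n Φ γ)ᵀ)).mulVec X (1, j)) ^ 2) =
          1 / γ * (1 / 2 * ((∑ j : Fin n, X (1, j) ^ 2) +
            ∑ j : Fin n, ∑ j' : Fin n, X (0, j) * Φ j j' * X (0, j')))) := by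
  have hQ := Mblk_mul_Qblk_add_Qblk_mul_transpose Φ hΦ hγ
  refine ⟨hQ, fun hpd hγpos => ?_⟩
  obtain ⟨T, c, l, hc, hl, hT⟩ := exists_isLyapunovMatrix_Mblk Φ hΦ hpd hγpos
  have hgram := hT.dotProduct_mulVec_eq_integral hc hl hQ
  refine ⟨fun p q => by simpa using hgram (Pi.single p 1) (Pi.single q 1), fun X => ?_⟩
  rw [← dotProduct_Qblk_mulVec, hgram]
  simp_rw [sum_sq_snd_eq_dotProduct_Pblk_mulVec, ← dotProduct_exp_mul_mul_exp_transpose_mulVec]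

/-- `Q` solves the Lyapunov equation `MQ + QMᵀ = P⁽²⁾`; for positive
definite `Φ` and `γ > 0` it equals `∫₀^∞ e^{−tM} P⁽²⁾ e^{−tMᵀ} dt`, and consequently
`∫₀^∞ |(e^{−tMᵀ}X)₂|² dt = H(X)/γ` for every `X ∈ ℝ^{2n}`. -/
theorem stmt18 (n : ℕ) (hn : 1 ≤ n) (Φ : Matrix (Fin n) (Fin n) ℝ) (hΦ : Φ.IsSymm)
    (γ : ℝ) (hγ : γ ≠ 0) :
    Mblk n Φ γ * Qblk n Φ γ + Qblk n Φ γ * (Mblk n Φ γ)ᵀ = Pblk n ∧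
    (Φ.PosDef → 0 < γ →
      (∀ p q : Fin 2 × Fin n,
        Qblk n Φ γ p q = ∫ t in Set.Ioi (0:ℝ),
          (NormedSpace.exp ((-t) • Mblk n Φ γ) * Pblk n *
            NormedSpace.exp ((-t) • (Mblk n Φ γ)ᵀ)) p q) ∧
      ∀ X : Fin 2 × Fin n → ℝ,
        (∫ t in Set.Ioi (0:ℝ), ∑ j : Fin n,
            ((NormedSpace.exp ((-t) • (Mblk n Φ γ)ᵀ)).mulVec X (1, j)) ^ 2) =
          1 / γ * (1 / 2 * ((∑ j : Fin n, X (1, j) ^ 2) +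
            ∑ j : Fin n, ∑ j' : Fin n, X (0, j) * Φ j j' * X (0, j')))) :=
  stmt18_general n Φ hΦ γ hγ
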